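/- Let w = (w_n)_{n≥1} be a bounded unilateral weight sequence and B_w the unilateral weighted backward shift on X = ℓ^p(ℤ₊) (1 ≤ p < ∞) or c₀(ℤ₊). If B_w satisfies property P_{BD̄}, then for every r ∈ ℕ the direct sum B_w ⊕ B_w² ⊕ ⋯ ⊕ B_w^r is a 𝒟*-operator on X^r. -/

import Mathlib

open Filter Topology
open scoped ENNReal

noncomputable def blockCount (A : Set ℕ) (k s : ℕ) : ℕ :=
  Nat.card (A ∩ Set.Icc (k + 1) (k + s) : Set ℕ)

/-- upper Banach density -/
noncomputable def upperBanachDensity (A : Set ℕ) : ℝ :=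
  Filter.limsup (fun s : ℕ =>
    (Filter.limsup (fun k : ℕ => (blockCount A k s : ℝ)) Filter.atTop) / s) Filter.atTop

/-- lower Banach density -/
noncomputable def lowerBanachDensity (A : Set ℕ) : ℝ :=
  Filter.liminf (fun s : ℕ =>
    (Filter.liminf (fun k : ℕ => (blockCount A k s : ℝ)) Filter.atTop) / s) Filter.atTop

/-- the family `BD̄` of sets of positive upper Banach density -/
def upperBD (A : Set ℕ) : Prop := 0 < upperBanachDensity A

/-- the family `BD₁` of sets of lower Banach density one -/
def BDone (A : Set ℕ) : Prop := lowerBanachDensity A = 1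

/-- essential idempotent ultrafilter -/
def IsEssentialIdempotent (p : Ultrafilter ℕ) : Prop :=
  (∀ A : Set ℕ, A ∈ p ↔ {n : ℕ | {m : ℕ | n + m ∈ A} ∈ p} ∈ p) ∧
    ∀ A ∈ p, 0 < upperBanachDensity A

/-- membership in `𝒟*`, the intersection of all essential idempotents -/
def InDstar (A : Set ℕ) : Prop :=
  ∀ p : Ultrafilter ℕ, IsEssentialIdempotent p → A ∈ p

/-- limit of a real sequence along a family of subsets of ℕ -/
def FamilyLim (F : Set ℕ → Prop) (x : ℕ → ℝ) (y : ℝ) : Prop :=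
  ∀ V : Set ℝ, IsOpen V → y ∈ V → F {n | x n ∈ V}

/-- property `P_𝓕` for a sequence of maps -/
def SatisfiesP {X : Type*} [TopologicalSpace X] (T : ℕ → X → X) (F : Set ℕ → Prop) : Prop :=
  ∀ U : Set X, IsOpen U → U.Nonempty → ∃ x : X, F {n | T n x ∈ U}

/-- topological 𝒟-recurrence with respect to a sequence of scalars -/
def TopDRecurrentWrt {X : Type*} [NormedAddCommGroup X] [NormedSpace ℂ X]
    (T : X →L[ℂ] X) (l : ℕ → ℂ) : Prop :=
  ∃ p : Ultrafilter ℕ, IsEssentialIdempotent p ∧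
    ∀ U : Set X, IsOpen U → U.Nonempty → ∃ x : X, ∀ r : ℕ,
      {k : ℕ | 0 < upperBanachDensity
        {a : ℕ | ∀ j ≤ r, (T ^ (j * k)) (l a • (T ^ a) x) ∈ U}} ∈ p

/-- topological 𝒟-recurrence -/
def TopDRecurrent {X : Type*} [NormedAddCommGroup X] [NormedSpace ℂ X]
    (T : X →L[ℂ] X) : Prop :=
  TopDRecurrentWrt T fun _ => 1

/-- reiterative hypercyclicity for a sequence of maps -/
def ReiterativelyHypercyclicSeq {X : Type*} [TopologicalSpace X] (T : ℕ → X → X) : Prop :=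
  ∃ x : X, ∀ U : Set X, IsOpen U → U.Nonempty → 0 < upperBanachDensity {n | T n x ∈ U}

/-- 𝒟-reiterative hypercyclicity with respect to a sequence of scalars -/
def DReiterativelyHypercyclicWrt {X : Type*} [NormedAddCommGroup X] [NormedSpace ℂ X]
    (T : X →L[ℂ] X) (l : ℕ → ℂ) : Prop :=
  ∃ p : Ultrafilter ℕ, IsEssentialIdempotent p ∧ ∃ x : X,
    ∀ U : Set X, IsOpen U → U.Nonempty → ∀ r : ℕ,
      {k : ℕ | 0 < upperBanachDensity
        {a : ℕ | ∀ j ≤ r, (T ^ (j * k)) (l a • (T ^ a) x) ∈ U}} ∈ p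

/-- hypercyclic operator -/
def Hypercyclic {X : Type*} [NormedAddCommGroup X] [NormedSpace ℂ X] (T : X →L[ℂ] X) : Prop :=
  ∃ x : X, Dense (Set.range fun n : ℕ => (T ^ n) x)

/-- topological multiple recurrence -/
def TopMultiplyRecurrent {X : Type*} [NormedAddCommGroup X] [NormedSpace ℂ X]
    (T : X →L[ℂ] X) : Prop :=
  ∀ U : Set X, IsOpen U → U.Nonempty → ∀ r : ℕ, ∃ k : ℕ, 0 < k ∧
    ∃ x : X, ∀ j ≤ r, (T ^ (j * k)) x ∈ U

/-- `𝓕`-operator -/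
def FOperator {X : Type*} [NormedAddCommGroup X] [NormedSpace ℂ X]
    (F : Set ℕ → Prop) (T : X →L[ℂ] X) : Prop :=
  ∀ U V : Set X, IsOpen U → IsOpen V → U.Nonempty → V.Nonempty →
    F {n : ℕ | ∃ x ∈ U, (T ^ n) x ∈ V}

/-- mixing operator -/
def MixingOp {X : Type*} [NormedAddCommGroup X] [NormedSpace ℂ X]
    (T : X →L[ℂ] X) : Prop :=
  ∀ U V : Set X, IsOpen U → IsOpen V → U.Nonempty → V.Nonempty →
    {n : ℕ | ∃ x ∈ U, (T ^ n) x ∈ V} ∈ Filter.cofinite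

/-- recurrent operator -/
def RecurrentOp {X : Type*} [NormedAddCommGroup X] [NormedSpace ℂ X]
    (T : X →L[ℂ] X) : Prop :=
  ∀ U : Set X, IsOpen U → U.Nonempty →
    ∃ n : ℕ, 0 < n ∧ (U ∩ (fun x => (T ^ n) x) ⁻¹' U).Nonempty

/-- syndetic set -/
def Syndetic (A : Set ℕ) : Prop :=
  ∃ k : ℕ, 0 < k ∧ ∀ n : ℕ, ∃ i : ℕ, 1 ≤ i ∧ i ≤ k ∧ n + i ∈ A

/-- upper (asymptotic) density -/
noncomputable def upperDensity (A : Set ℕ) : ℝ :=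
  Filter.limsup (fun n : ℕ => (Nat.card (A ∩ Set.Icc 1 n : Set ℕ) : ℝ) / n) Filter.atTop

/-- bounded weight -/
def BddWeight {ι : Type*} (w : ι → ℂ) : Prop := ∃ C : ℝ, ∀ i, ‖w i‖ ≤ C

/-- unilateral weighted backward shift relative to a basis `e` -/
def IsUnilateralWeightedShift {X : Type*} [NormedAddCommGroup X] [NormedSpace ℂ X]
    (e : ℕ → X) (w : ℕ → ℂ) (B : X →L[ℂ] X) : Prop :=
  B (e 0) = 0 ∧ ∀ n : ℕ, B (e (n + 1)) = w (n + 1) • e n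

/-- bilateral weighted backward shift relative to a basis `e` -/
def IsBilateralWeightedShift {X : Type*} [NormedAddCommGroup X] [NormedSpace ℂ X]
    (e : ℤ → X) (w : ℤ → ℂ) (B : X →L[ℂ] X) : Prop :=
  ∀ k : ℤ, B (e k) = w k • e (k - 1)

/-- `B ⊕ B² ⊕ ⋯ ⊕ B^r` acting on `X^r` -/
noncomputable def directSumPow {X : Type*} [NormedAddCommGroup X] [NormedSpace ℂ X]
    (T : X →L[ℂ] X) (r : ℕ) : (Fin r → X) →L[ℂ] (Fin r → X) :=
  ContinuousLinearMap.pi fun i => (T ^ ((i : ℕ) + 1)).comp (ContinuousLinearMap.proj i)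

/-- canonical basis vector of `c₀` over a discrete index type -/
noncomputable def c0Single {α : Type*} [TopologicalSpace α] [DiscreteTopology α]
    [DecidableEq α] (k : α) : ZeroAtInftyContinuousMap α ℂ where
  toFun := fun m => if m = k then 1 else 0
  continuous_toFun := continuous_of_discreteTopology
  zero_at_infty' := by
    rw [Filter.cocompact_eq_cofinite]
    refine Filter.Tendsto.congr' ?_ tendsto_const_nhds
    filter_upwards [Filter.eventually_cofinite_ne k] with m hm
    simp [hm]

/-- the set `A_{M;j}` for a bilateral weight -/
def AMjZ (w : ℤ → ℂ) (M : ℝ) (j : ℤ) : Set ℕ :=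
  {n : ℕ | M < ∏ i ∈ Finset.Icc (j + 1) (j + (n : ℤ)), ‖w i‖}

/-- the set `Ā_{M;j}` for a bilateral weight -/
def AbarMjZ (w : ℤ → ℂ) (M : ℝ) (j : ℤ) : Set ℕ :=
  {n : ℕ | ∏ i ∈ Finset.Icc (j - (n : ℤ) + 1) j, ‖w i‖ < 1 / M}

/-- the set `A_{M;j}` for a unilateral weight -/
def AMjN (w : ℕ → ℂ) (M : ℝ) (j : ℕ) : Set ℕ :=
  {n : ℕ | M < ∏ i ∈ Finset.Icc (j + 1) (j + n), ‖w i‖}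

/-!
Applying `P_BD̄` to a small ball around the basis vector `e_j` produces a set `D` of positive upper
Banach density such that `∏_{j < l ≤ j + s} |w_l|` is large whenever `s` is a difference of two
elements of `D`. By Hindman's theorem and a pigeonhole count of translates of `D`, every essential
idempotent contains the sets `{g | κ g ∈ D - D}`, so for `𝒟*`-many `n` all the products
`∏_{d < l ≤ d + κ n} |w_l|` with `d < m`, `κ ≤ r` are large. For such `n` the shifts `B_w^{κ n}`
kill the first `m` basis vectors and map a small vector onto any prescribed combination of them,
which moves a truncation of `u ∈ U` into `V` coordinatewise.
-/
lemma blockCount_le (A : Set ℕ) (k s : ℕ) : blockCount A k s ≤ s := by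
  calc blockCount A k s ≤ Nat.card (Set.Icc (k + 1) (k + s)) :=
        Nat.card_mono (Set.finite_Icc _ _) Set.inter_subset_right
    _ = s := by simp

lemma upperBanachDensity_eq_zero_of_finite {A : Set ℕ} (hA : A.Finite) :
    upperBanachDensity A = 0 := by
  obtain ⟨N, hN⟩ := hA.bddAbove
  have hblock : ∀ s, ∀ᶠ k in atTop, (blockCount A k s : ℝ) = 0 := fun s ↦ by
    filter_upwards [eventually_ge_atTop N] with k hk
    have : A ∩ Set.Icc (k + 1) (k + s) = ∅ :=
      Set.eq_empty_of_forall_notMem fun n hn ↦ by have := hN hn.1; have := hn.2.1; omega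
    simp [blockCount, this]
  simp [upperBanachDensity, limsup_congr (hblock _)]

lemma exists_blockCount_gt {D : Set ℕ} (hD : 0 < upperBanachDensity D) (N : ℕ) :
    ∃ s k, N ≤ s ∧ N ≤ k ∧ upperBanachDensity D / 2 * s < blockCount D k s := by
  have hinner : ∀ s, 0 ≤ limsup (fun k ↦ (blockCount D k s : ℝ)) atTop := fun s ↦
    le_limsup_of_frequently_le (.of_forall fun _ ↦ Nat.cast_nonneg _)
      (isBoundedUnder_of ⟨s, fun k ↦ by exact_mod_cast blockCount_le D k s⟩)
  have hs : ∃ᶠ s : ℕ in atTop,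
      upperBanachDensity D / 2 < limsup (fun k ↦ (blockCount D k s : ℝ)) atTop / s :=
    frequently_lt_of_lt_limsup (isCoboundedUnder_le_of_le _ fun s ↦ by have := hinner s; positivity)
      (half_lt_self hD)
  obtain ⟨s, hs, hNs⟩ := (hs.and_eventually (eventually_ge_atTop (max N 1))).exists
  have hs0 : (0 : ℝ) < s := by have := le_of_max_le_right hNs; positivity
  have hk : ∃ᶠ k in atTop, upperBanachDensity D / 2 * s < blockCount D k s :=
    frequently_lt_of_lt_limsup (isCoboundedUnder_le_of_le _ fun _ ↦ Nat.cast_nonneg _)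
      ((lt_div_iff₀ hs0).mp hs)
  obtain ⟨k, hk, hNk⟩ := (hk.and_eventually (eventually_ge_atTop N)).exists
  exact ⟨s, k, le_of_max_le_left hNs, hNk, hk⟩

/-- Otherwise the `L` translates `F - c i` would be pairwise disjoint subsets of
`[k + 1 - S, k + s]`, forcing `L |F| ≤ s + S`. -/
lemma exists_add_mem_add_mem_of_card {F : Finset ℕ} {k s S L : ℕ} (c : ℕ → ℕ)
    (hF : F ⊆ Finset.Icc (k + 1) (k + s)) (hSk : S ≤ k) (hcS : ∀ i < L, c i ≤ S)
    (hcard : s + S < L * F.card) :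
    ∃ i i' m, i < i' ∧ i' < L ∧ m + c i ∈ F ∧ m + c i' ∈ F := by
  by_contra! hcon
  have hmem : ∀ ix ∈ Finset.range L ×ˢ F,
      k + 1 ≤ ix.2 ∧ ix.2 ≤ k + s ∧ c ix.1 ≤ S ∧ ix.1 < L ∧ ix.2 ∈ F := by
    intro ix h
    rw [Finset.mem_product, Finset.mem_range] at h
    have := Finset.mem_Icc.mp (hF h.2)
    exact ⟨this.1, this.2, hcS _ h.1, h.1, h.2⟩
  have hne : ∀ ix ∈ Finset.range L ×ˢ F, ∀ ix' ∈ Finset.range L ×ˢ F, ix.1 < ix'.1 →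
      ix.2 + S - c ix.1 ≠ ix'.2 + S - c ix'.1 := by
    rintro ⟨i, x⟩ hx ⟨i', x'⟩ hx' hlt heq
    obtain ⟨hx1, -, hx3, -, hxF⟩ := hmem _ hx
    obtain ⟨hx1', -, hx3', hi', hxF'⟩ := hmem _ hx'
    dsimp only at *
    refine hcon i i' (x - c i) hlt hi' (by rwa [Nat.sub_add_cancel (by omega)]) ?_
    rwa [show x - c i + c i' = x' by omega]
  have hinj : Set.InjOn (fun ix : ℕ × ℕ ↦ ix.2 + S - c ix.1) ↑(Finset.range L ×ˢ F) := by
    intro ix hx ix' hx' heq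
    rcases lt_trichotomy ix.1 ix'.1 with h | h | h
    · exact absurd heq (hne ix hx ix' hx' h)
    · have := hmem ix hx; have := hmem ix' hx'
      exact Prod.ext h (by dsimp only at heq; rw [h] at heq; omega)
    · exact absurd heq.symm (hne ix' hx' ix hx h)
  have hmaps : Set.MapsTo (fun ix : ℕ × ℕ ↦ ix.2 + S - c ix.1) ↑(Finset.range L ×ˢ F)
      ↑(Finset.Icc (k + 1) (k + s + S)) := by
    intro ix hx
    have := hmem ix hx
    simp only [Finset.coe_Icc, Set.mem_Icc]
    omega
  have := Finset.card_le_card_of_injOn _ hmaps hinj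
  rw [Finset.card_product, Finset.card_range, Nat.card_Icc] at this
  omega

lemma exists_add_mem_add_mem {D : Set ℕ} (hD : 0 < upperBanachDensity D) (c : ℕ → ℕ) {L : ℕ}
    (hL : 4 / upperBanachDensity D < L) :
    ∃ i i' m, i < i' ∧ i' < L ∧ m + c i ∈ D ∧ m + c i' ∈ D := by
  classical
  set δ := upperBanachDensity D
  obtain ⟨S, hcS⟩ : ∃ S, ∀ i < L, c i ≤ S :=
    ⟨(Finset.range L).sup c, fun i hi ↦ Finset.le_sup (Finset.mem_range.mpr hi)⟩
  obtain ⟨s, k, hSs, hSk, hcount⟩ := exists_blockCount_gt hD S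
  set F := (Finset.Icc (k + 1) (k + s)).filter (· ∈ D)
  have hF : blockCount D k s = F.card := by
    rw [blockCount, ← Set.ncard_coe_finset, Nat.card_coe_set_eq]
    congr 1; ext; simp [F, and_comm]
  have hcard : s + S < L * F.card := by
    have : 2 * (s : ℝ) < L * F.card :=
      calc 2 * (s : ℝ) = 4 / δ * (δ / 2 * s) := by field_simp; ring
        _ < 4 / δ * F.card := by rw [← hF]; gcongr
        _ ≤ L * F.card := by gcongr
    have : (S : ℝ) ≤ s := by exact_mod_cast hSs
    exact_mod_cast (show ((s + S : ℕ) : ℝ) < L * F.card by push_cast; linarith)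
  obtain ⟨i, i', m, hii', hi', hi, hi'F⟩ :=
    exists_add_mem_add_mem_of_card c (Finset.filter_subset _ _) hSk hcS hcard
  exact ⟨i, i', m, hii', hi', (Finset.mem_filter.mp hi).2, (Finset.mem_filter.mp hi'F).2⟩

attribute [local instance] Ultrafilter.add

namespace IsEssentialIdempotent

variable {q : Ultrafilter ℕ}

lemma add_self (hq : IsEssentialIdempotent q) : q + q = q :=
  Ultrafilter.ext fun A ↦ (hq.1 A).symm

lemma Ici_mem (hq : IsEssentialIdempotent q) (N : ℕ) : Set.Ici N ∈ q := by
  by_contra h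
  refine (hq.2 _ (Ultrafilter.compl_mem_iff_notMem.mpr h)).ne' ?_
  exact upperBanachDensity_eq_zero_of_finite (by simp)

/-- By Hindman's theorem the complement, if it were in `q`, would contain all finite sums of a
sequence `a`; two of the partial sums `σ i` of `a` then satisfy `m + κ σ i, m + κ σ i' ∈ D`, and
`σ i' - σ i` is itself a finite sum of `a`. -/
lemma setOf_add_mul_mem_mem (hq : IsEssentialIdempotent q) {D : Set ℕ}
    (hD : 0 < upperBanachDensity D) (κ : ℕ) : {g | 0 < g ∧ ∃ a ∈ D, a + κ * g ∈ D} ∈ q := by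
  by_contra hG
  have hH : {g | 0 < g ∧ ∃ a ∈ D, a + κ * g ∈ D}ᶜ ∩ Set.Ici 1 ∈ q :=
    Filter.inter_mem (Ultrafilter.compl_mem_iff_notMem.mpr hG) (hq.Ici_mem 1)
  obtain ⟨a, ha⟩ := Hindman.exists_FS_of_large q hq.add_self _ hH
  obtain ⟨L, hL⟩ := exists_nat_gt (4 / upperBanachDensity D)
  obtain ⟨i, i', m, hii', -, hi, hi'⟩ :=
    exists_add_mem_add_mem hD (fun i ↦ κ * ∑ t ∈ Finset.range i, a.get t) hL
  have hg := ha (Hindman.FS.finsetSum a (Finset.Ico i i') (Finset.nonempty_Ico.mpr hii'))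
  refine hg.1 ⟨hg.2, m + κ * ∑ t ∈ Finset.range i, a.get t, hi, ?_⟩
  rwa [add_assoc, ← mul_add, Finset.sum_range_add_sum_Ico _ hii'.le]

end IsEssentialIdempotent

/-- `𝒟*` as a filter: the members of a supremum of filters are the sets common to all of them. -/
def dStar : Filter ℕ := ⨆ (q : Ultrafilter ℕ) (_ : IsEssentialIdempotent q), (q : Filter ℕ)

lemma inDstar_iff_mem_dStar {A : Set ℕ} : InDstar A ↔ A ∈ dStar := by
  simp [InDstar, dStar, Filter.mem_iSup]

lemma dStar_le_atTop : dStar ≤ atTop :=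
  fun _ hA ↦ inDstar_iff_mem_dStar.mp fun _ hq ↦
    Filter.mem_of_superset (hq.Ici_mem _) (Filter.mem_atTop_sets.mp hA).choose_spec

lemma setOf_add_mul_mem_mem_dStar {D : Set ℕ} (hD : 0 < upperBanachDensity D) (κ : ℕ) :
    {g | 0 < g ∧ ∃ a ∈ D, a + κ * g ∈ D} ∈ dStar :=
  inDstar_iff_mem_dStar.mp fun _ hq ↦ hq.setOf_add_mul_mem_mem hD κ

lemma SchauderBasis.dense_span {𝕜 X : Type*} [NontriviallyNormedField 𝕜] [NormedAddCommGroup X]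
    [NormedSpace 𝕜 X] (b : SchauderBasis 𝕜 X) :
    Dense (Submodule.span 𝕜 (Set.range b) : Set X) := fun x ↦
  mem_closure_of_tendsto (b.tendsto_proj x) (.of_forall fun n ↦ by
    rw [SchauderBasis.proj_apply]
    exact Submodule.sum_mem _ fun i _ ↦ Submodule.smul_mem _ _ (Submodule.subset_span ⟨i, rfl⟩))

namespace IsUnilateralWeightedShift

variable {X : Type*} [NormedAddCommGroup X] [NormedSpace ℂ X] {e : ℕ → X} {w : ℕ → ℂ}
  {B : X →L[ℂ] X}

lemma pow_apply_add (hB : IsUnilateralWeightedShift e w B) (n d : ℕ) :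
    (B ^ n) (e (d + n)) = (∏ l ∈ Finset.Ioc d (d + n), w l) • e d := by
  induction n with
  | zero => simp
  | succ n ih =>
    rw [pow_succ, mul_apply_eq_comp, ← add_assoc, hB.2, map_smul, ih, smul_smul,
      Finset.prod_Ioc_succ_top (by omega), mul_comm]

lemma pow_apply_of_lt (hB : IsUnilateralWeightedShift e w B) {n k : ℕ} (hk : k < n) :
    (B ^ n) (e k) = 0 := by
  obtain ⟨m, rfl⟩ : ∃ m, n = m + 1 + k := ⟨n - k - 1, by omega⟩
  have h := pow_apply_add hB k 0
  rw [zero_add] at h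
  rw [pow_add, mul_apply_eq_comp, h, pow_succ, mul_apply_eq_comp, map_smul, hB.1, smul_zero,
    map_zero]

lemma exists_pow_apply_eq_sum (hB : IsUnilateralWeightedShift e w B) (hw : ∀ n, w n ≠ 0)
    (he : ∀ d, ‖e d‖ ≤ 1) {m n : ℕ} {M : ℝ} (hM : 0 < M)
    (hprod : ∀ d < m, M ≤ ∏ l ∈ Finset.Ioc d (d + n), ‖w l‖) (c : ℕ → ℂ) :
    ∃ z, (B ^ n) z = ∑ d ∈ Finset.range m, c d • e d ∧
      ‖z‖ ≤ (∑ d ∈ Finset.range m, ‖c d‖) / M := by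
  refine ⟨∑ d ∈ Finset.range m, (c d / ∏ l ∈ Finset.Ioc d (d + n), w l) • e (d + n), ?_, ?_⟩
  · rw [map_sum]
    refine Finset.sum_congr rfl fun d _ ↦ ?_
    rw [map_smul, hB.pow_apply_add, smul_smul,
      div_mul_cancel₀ _ (Finset.prod_ne_zero_iff.mpr fun l _ ↦ hw l)]
  · rw [Finset.sum_div]
    refine (norm_sum_le _ _).trans (Finset.sum_le_sum fun d hd ↦ ?_)
    have hMd := hprod d (Finset.mem_range.mp hd)
    rw [norm_smul, norm_div, norm_prod]
    calc ‖c d‖ / (∏ l ∈ Finset.Ioc d (d + n), ‖w l‖) * ‖e (d + n)‖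
        ≤ ‖c d‖ / ∏ l ∈ Finset.Ioc d (d + n), ‖w l‖ :=
          mul_le_of_le_one_right (by positivity) (he (d + n))
      _ ≤ ‖c d‖ / M := by gcongr

variable {b : SchauderBasis ℂ X}

lemma coord_pow_apply (hB : IsUnilateralWeightedShift b w B) (j n : ℕ) (x : X) :
    b.coord j ((B ^ n) x) = (∏ l ∈ Finset.Ioc j (j + n), w l) * b.coord (j + n) x := by
  have key : (b.coord j).comp (B ^ n) = (∏ l ∈ Finset.Ioc j (j + n), w l) • b.coord (j + n) := by
    refine ContinuousLinearMap.ext_on b.dense_span ?_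
    rintro _ ⟨k, rfl⟩
    rcases lt_or_ge k n with hk | hk
    · simp [hB.pow_apply_of_lt hk, b.ortho, show j + n ≠ k by omega]
    · obtain ⟨d, rfl⟩ := Nat.exists_eq_add_of_le' hk
      by_cases hd : j = d <;> simp [hB.pow_apply_add, b.ortho, hd]
  simpa using DFunLike.congr_fun key x

lemma pow_apply_proj_of_le (hB : IsUnilateralWeightedShift b w B) {m n : ℕ} (h : m ≤ n) (y : X) :
    (B ^ n) (b.proj m y) = 0 := by
  rw [b.proj_apply, map_sum]
  exact Finset.sum_eq_zero fun d hd ↦ by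
    rw [map_smul, hB.pow_apply_of_lt (by simp at hd; omega), smul_zero]

end IsUnilateralWeightedShift

section SchauderBasis

variable {X : Type*} [NormedAddCommGroup X] [NormedSpace ℂ X] {b : SchauderBasis ℂ X}
  {w : ℕ → ℂ} {B : X →L[ℂ] X}

/-- Take `D = {n | ‖B^n x - b j‖ < ε}`: then `B^a x` has almost no `(j + s)`-th coordinate while
`B^s (B^a x)` has `j`-th coordinate close to `1`, and the two coordinates differ by the factor
`∏_{j < l ≤ j + s} w l`. -/
lemma exists_upperBanachDensity_pos_lt_prod (hcoord : ∀ d, ‖b.coord d‖ ≤ 1)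
    (hB : IsUnilateralWeightedShift b w B) (hP : SatisfiesP (fun n x ↦ (B ^ n) x) upperBD)
    (M : ℝ) (j : ℕ) :
    ∃ D : Set ℕ, 0 < upperBanachDensity D ∧
      ∀ a ∈ D, ∀ s, 0 < s → a + s ∈ D → M < ∏ l ∈ Finset.Ioc j (j + s), ‖w l‖ := by
  set ε : ℝ := (|M| + 2)⁻¹
  have hε : 0 < ε := by positivity
  obtain ⟨x, hx⟩ := hP _ Metric.isOpen_ball ⟨b j, Metric.mem_ball_self hε⟩
  refine ⟨_, hx, fun a ha s hs has ↦ ?_⟩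
  have hnear : ∀ k {y}, y ∈ Metric.ball (b j) ε → ‖b.coord k y - b.coord k (b j)‖ < ε :=
    fun k y hy ↦ calc ‖b.coord k y - b.coord k (b j)‖ = ‖b.coord k (y - b j)‖ := by rw [map_sub]
      _ ≤ ‖b.coord k‖ * ‖y - b j‖ := (b.coord k).le_opNorm _
      _ ≤ 1 * ‖y - b j‖ := by gcongr; exact hcoord k
      _ < ε := by rw [one_mul, ← dist_eq_norm]; exact hy
  have h1 := hnear j has
  have h2 := hnear (j + s) ha
  simp only [b.ortho, Pi.single_apply, if_true, show j + s ≠ j by omega, if_false, sub_zero]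
    at h1 h2
  rw [add_comm a, pow_add, mul_apply_eq_comp, hB.coord_pow_apply, norm_sub_rev] at h1
  have h1' : 1 - ε < (∏ l ∈ Finset.Ioc j (j + s), ‖w l‖) * ‖b.coord (j + s) ((B ^ a) x)‖ := by
    have := norm_sub_norm_le (1 : ℂ) ((∏ l ∈ Finset.Ioc j (j + s), w l) *
      b.coord (j + s) ((B ^ a) x))
    rw [norm_one, norm_mul, norm_prod] at this
    linarith
  have hMε : (|M| + 2) * ε = 1 := mul_inv_cancel₀ (by positivity)
  by_contra! hle
  have := mul_le_mul (hle.trans (le_abs_self M)) h2.le (norm_nonneg _) (abs_nonneg M)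
  linarith

lemma eventually_lt_prod_mul (hcoord : ∀ d, ‖b.coord d‖ ≤ 1)
    (hB : IsUnilateralWeightedShift b w B) (hP : SatisfiesP (fun n x ↦ (B ^ n) x) upperBD)
    (M : ℝ) (j : ℕ) {κ : ℕ} (hκ : 0 < κ) :
    ∀ᶠ n in dStar, M < ∏ l ∈ Finset.Ioc j (j + κ * n), ‖w l‖ := by
  obtain ⟨D, hD, hDM⟩ := exists_upperBanachDensity_pos_lt_prod hcoord hB hP M j
  filter_upwards [setOf_add_mul_mem_mem_dStar hD κ] with g ⟨hg, a, ha, ha'⟩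
  exact hDM a ha (κ * g) (by positivity) ha'

lemma eventually_exists_pow_apply_eq_proj (hb : ∀ d, ‖b d‖ ≤ 1)
    (hcoord : ∀ d, ‖b.coord d‖ ≤ 1) (hw : ∀ n, w n ≠ 0) (hB : IsUnilateralWeightedShift b w B)
    (hP : SatisfiesP (fun n x ↦ (B ^ n) x) upperBD) (y : X) (m : ℕ) {κ : ℕ} (hκ : 0 < κ)
    {δ : ℝ} (hδ : 0 < δ) :
    ∀ᶠ n in dStar, ∃ z, (B ^ (κ * n)) z = b.proj m y ∧ ‖z‖ < δ := by
  set S := ∑ d ∈ Finset.range m, ‖b.coord d y‖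
  have hM : 0 < S / δ + 1 := by positivity
  filter_upwards [(eventually_all_finset (Finset.range m)).2 fun d _ ↦
    eventually_lt_prod_mul hcoord hB hP (S / δ + 1) d hκ] with n hn
  obtain ⟨z, hz, hzS⟩ := hB.exists_pow_apply_eq_sum hw hb hM
    (fun d hd ↦ (hn d (Finset.mem_range.mpr hd)).le) (fun d ↦ b.coord d y)
  refine ⟨z, by rw [hz, b.proj_apply], hzS.trans_lt ?_⟩
  rw [div_lt_iff₀ hM, mul_add, mul_div_cancel₀ _ hδ.ne', mul_one]
  linarith

lemma directSumPow_pow_apply (T : X →L[ℂ] X) (r n : ℕ) (x : Fin r → X) (i : Fin r) :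
    (directSumPow T r ^ n) x i = (T ^ ((i + 1) * n)) (x i) := by
  induction n generalizing x with
  | zero => simp
  | succ n ih =>
    have h : directSumPow T r x i = (T ^ (i + 1 : ℕ)) (x i) := by simp [directSumPow]
    rw [pow_succ, mul_apply_eq_comp, ih, h, ← mul_apply_eq_comp, ← pow_add]
    ring_nf

theorem fOperator_inDstar_directSumPow (hb : ∀ d, ‖b d‖ ≤ 1)
    (hcoord : ∀ d, ‖b.coord d‖ ≤ 1) (hw : ∀ n, w n ≠ 0) (hB : IsUnilateralWeightedShift b w B)
    (hP : SatisfiesP (fun n x ↦ (B ^ n) x) upperBD) (r : ℕ) :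
    FOperator InDstar (directSumPow B r) := by
  rintro U V hU hV ⟨u, hu⟩ ⟨v, hv⟩
  obtain ⟨εU, hεU, hUball⟩ := Metric.isOpen_iff.mp hU u hu
  obtain ⟨εV, hεV, hVball⟩ := Metric.isOpen_iff.mp hV v hv
  obtain ⟨m, hmu, hmv⟩ := ((eventually_all.2 fun i ↦
      (b.tendsto_proj (u i)).eventually (Metric.ball_mem_nhds _ (half_pos hεU))).and
    (eventually_all.2 fun i ↦
      (b.tendsto_proj (v i)).eventually (Metric.ball_mem_nhds _ hεV))).exists
  rw [inDstar_iff_mem_dStar]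
  filter_upwards [dStar_le_atTop (eventually_ge_atTop m), eventually_all.2 fun i : Fin r ↦
    eventually_exists_pow_apply_eq_proj hb hcoord hw hB hP (v i) m (κ := i + 1) (by omega)
      (half_pos hεU)] with n hmn hz
  choose z hBz hz using hz
  refine ⟨fun i ↦ b.proj m (u i) + z i, hUball ?_, hVball ?_⟩
  · rw [Metric.mem_ball, dist_pi_lt_iff hεU]
    intro i
    have := hmu i
    rw [dist_eq_norm] at this
    rw [dist_eq_norm, add_sub_right_comm]
    linarith [norm_add_le (b.proj m (u i) - u i) (z i), hz i]
  · rw [Metric.mem_ball, dist_pi_lt_iff hεV]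
    intro i
    have hmi : m ≤ (i + 1) * n := hmn.trans (Nat.le_mul_of_pos_left n (by omega))
    rw [directSumPow_pow_apply, map_add, hB.pow_apply_proj_of_le hmi, zero_add, hBz i]
    exact hmv i

end SchauderBasis

lemma ZeroAtInftyContinuousMap.norm_apply_le {α β : Type*} [TopologicalSpace α]
    [SeminormedAddCommGroup β] (f : ZeroAtInftyContinuousMap α β) (x : α) : ‖f x‖ ≤ ‖f‖ :=
  ZeroAtInftyContinuousMap.norm_toBCF_eq_norm (f := f) ▸ f.toBCF.norm_coe_le_norm x

lemma ZeroAtInftyContinuousMap.norm_le_iff {α β : Type*} [TopologicalSpace α]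
    [SeminormedAddCommGroup β] {f : ZeroAtInftyContinuousMap α β} {C : ℝ} (hC : 0 ≤ C) :
    ‖f‖ ≤ C ↔ ∀ x, ‖f x‖ ≤ C := by
  rw [← ZeroAtInftyContinuousMap.norm_toBCF_eq_norm, BoundedContinuousFunction.norm_le hC]
  rfl

noncomputable def c0Eval (d : ℕ) : ZeroAtInftyContinuousMap ℕ ℂ →L[ℂ] ℂ :=
  LinearMap.mkContinuous
    { toFun := fun f ↦ f d
      map_add' := fun _ _ ↦ rfl
      map_smul' := fun _ _ ↦ rfl } 1
    fun f ↦ by simpa using f.norm_apply_le d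

lemma c0Eval_apply (d : ℕ) (f : ZeroAtInftyContinuousMap ℕ ℂ) : c0Eval d f = f d := rfl

lemma c0Single_apply (k d : ℕ) : c0Single k d = if d = k then 1 else 0 := rfl

lemma hasSum_smul_c0Single (f : ZeroAtInftyContinuousMap ℕ ℂ) :
    HasSum (fun k ↦ f k • c0Single k) f := by
  rw [HasSum, SummationFilter.unconditional_filter, Metric.tendsto_atTop]
  intro ε hε
  have hfin : {k | ε / 2 ≤ ‖f k‖}.Finite := by
    have := f.zero_at_infty'
    rw [Filter.cocompact_eq_cofinite, tendsto_zero_iff_norm_tendsto_zero] at this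
    simpa using (this.eventually (gt_mem_nhds (half_pos hε)))
  refine ⟨hfin.toFinset, fun s hs ↦ ?_⟩
  rw [dist_comm, dist_eq_norm]
  refine lt_of_le_of_lt ((ZeroAtInftyContinuousMap.norm_le_iff (half_pos hε).le).2 fun x ↦ ?_)
    (half_lt_self hε)
  have hsum : (∑ k ∈ s, f k • c0Single k) x = if x ∈ s then f x else 0 := by
    rw [← c0Eval_apply, map_sum]
    simp [c0Eval_apply, c0Single_apply]
  rw [ZeroAtInftyContinuousMap.sub_apply, hsum]
  split_ifs with hx
  · simpa using (half_pos hε).le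
  · have : ‖f x‖ < ε / 2 := not_le.mp fun h ↦ hx (hs (hfin.mem_toFinset.mpr h))
    simpa using this.le

noncomputable def c0SchauderBasis : SchauderBasis ℂ (ZeroAtInftyContinuousMap ℕ ℂ) where
  basis := c0Single
  coord := c0Eval
  ortho i j := by simp [c0Eval_apply, c0Single_apply, Pi.single_apply]
  expansion f := (hasSum_smul_c0Single f).mono_left SummationFilter.le_atTop

lemma norm_c0Eval_le (d : ℕ) : ‖c0Eval d‖ ≤ 1 :=
  LinearMap.mkContinuous_norm_le _ zero_le_one _

lemma norm_c0Single_le (d : ℕ) : ‖c0Single d‖ ≤ 1 :=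
  (ZeroAtInftyContinuousMap.norm_le_iff zero_le_one).2 fun x ↦ by
    rw [c0Single_apply]; split_ifs <;> simp

section lp

variable (p : ℝ≥0∞) [Fact (1 ≤ p)]

noncomputable def lpSchauderBasis (hp : p ≠ ∞) : SchauderBasis ℂ (lp (fun _ : ℕ ↦ ℂ) p) where
  basis n := lp.single p n 1
  coord := lp.evalCLM ℂ (fun _ ↦ ℂ) p
  ortho i j := by simp [lp.evalCLM, Pi.single_apply]
  expansion f := by
    have h : HasSum (fun i ↦ lp.single p i (f i)) f (SummationFilter.conditional ℕ) :=
      (lp.hasSum_single hp f).mono_left SummationFilter.le_atTop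
    convert h using 2 with i
    simp [lp.evalCLM, ← lp.single_smul]

lemma norm_lp_evalCLM_le (d : ℕ) : ‖lp.evalCLM ℂ (fun _ : ℕ ↦ ℂ) p d‖ ≤ 1 :=
  LinearMap.mkContinuous_norm_le _ zero_le_one _

lemma norm_lp_single_one (d : ℕ) : ‖(lp.single p d 1 : lp (fun _ : ℕ ↦ ℂ) p)‖ = 1 := by
  simpa using lp.norm_single (E := fun _ : ℕ ↦ ℂ) (zero_lt_one.trans_le Fact.out) d (1 : ℂ)

end lp

theorem stmt8 :
    (∀ w : ℕ → ℂ, (∀ n, w n ≠ 0) → BddWeight w →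
      ∀ B : ZeroAtInftyContinuousMap ℕ ℂ →L[ℂ] ZeroAtInftyContinuousMap ℕ ℂ,
        IsUnilateralWeightedShift c0Single w B →
        SatisfiesP (fun n x => (B ^ n) x) upperBD →
        ∀ r : ℕ, FOperator InDstar (directSumPow B r)) ∧
    ∀ (p : ℝ≥0∞) [Fact (1 ≤ p)], p ≠ ∞ →
      ∀ w : ℕ → ℂ, (∀ n, w n ≠ 0) → BddWeight w →
      ∀ B : lp (fun _ : ℕ => ℂ) p →L[ℂ] lp (fun _ : ℕ => ℂ) p,
        IsUnilateralWeightedShift (fun n => lp.single p n 1) w B →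
        SatisfiesP (fun n x => (B ^ n) x) upperBD →
        ∀ r : ℕ, FOperator InDstar (directSumPow B r) := by
  refine ⟨fun w hw _ B hB hP r ↦ ?_, fun p _ hp w hw _ B hB hP r ↦ ?_⟩
  · exact fOperator_inDstar_directSumPow (b := c0SchauderBasis) norm_c0Single_le norm_c0Eval_le
      hw hB hP r
  · exact fOperator_inDstar_directSumPow (b := lpSchauderBasis p hp)
      (fun d ↦ (norm_lp_single_one p d).le) (norm_lp_evalCLM_le p) hw hB hP r
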